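/- arXiv:1908.06250 — 2 statements merged into one kernel-verified Lean document; each statement's English description precedes it below -/
import Mathlib

section
/- Let G be a strongly connected signed digraph with mirror adjacency matrix Â = [â_ij] = (W·A + Aᵀ·W)/2. Then for all i ≠ j, â_ij ≠ 0 if and only if a_ij ≠ 0 or a_ji ≠ 0; consequently the mirror signed graph of G is connected, i.e., the undirected graph on {1,…,n} that joins i and j whenever â_ij ≠ 0 is connected, and its edge set equals E ∪ Ẽ where E is the edge set of G and Ẽ consists of the reversals of the edges of G. -/
/-!
Entrywise, `Â i j = (w i * a i j + w j * a j i) / 2` with `w i = det(L̄_ii)`. Because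
`a i j * a j i ≥ 0`, this vanishes exactly when `a i j = a j i = 0`, as soon as every `w i` is
positive; and then every edge of `G` is an edge of the mirror graph, which is therefore connected.

Positivity of `w i` is a maximum principle. If `(L̄_ii + t • 1) x = 0` with `t ≥ 0`, extend `x` by
`0` at node `i`; at a node where `|x|` is maximal, each row of `L̄` says that `(t + Δ_k) x_k` is an
`|a_kj|`-weighted sum of the `x_j`, so every in-neighbour also attains the maximum. Strong
connectivity carries the maximum back to node `i`, where `x` vanishes, so `x = 0`. Hence the monic
polynomial `t ↦ det(L̄_ii + t • 1)` has no root on `[0, ∞)`, and is positive at `0`.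
-/

open Matrix BigOperators Filter

/-- In-degree of node `i`: sum of absolute values of the `i`-th row of `A`. -/
noncomputable def inDeg {n : ℕ} (A : Matrix (Fin n) (Fin n) ℝ) (i : Fin n) : ℝ := ∑ j, |A i j|

/-- Laplacian `L = Δ − A` of the signed digraph with adjacency matrix `A`. -/
noncomputable def lapOf {n : ℕ} (A : Matrix (Fin n) (Fin n) ℝ) : Matrix (Fin n) (Fin n) ℝ :=
  Matrix.diagonal (inDeg A) - A

/-- Laplacian `L̄ = Δ − Ā` of the induced unsigned digraph. -/
noncomputable def lapBar {n : ℕ} (A : Matrix (Fin n) (Fin n) ℝ) : Matrix (Fin n) (Fin n) ℝ :=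
  Matrix.diagonal (inDeg A) - Matrix.of (fun i j => |A i j|)

/-- `det(L̄_ii)`: determinant of `L̄` with its `i`-th row and column removed. -/
noncomputable def minorDet {n : ℕ} (A : Matrix (Fin n) (Fin n) ℝ) (i : Fin n) : ℝ :=
  Matrix.det ((lapBar A).submatrix (fun k : {j : Fin n // j ≠ i} => (k : Fin n))
    (fun k : {j : Fin n // j ≠ i} => (k : Fin n)))

/-- `W = diag(det(L̄_11), …, det(L̄_nn))`. -/
noncomputable def Wmat {n : ℕ} (A : Matrix (Fin n) (Fin n) ℝ) : Matrix (Fin n) (Fin n) ℝ :=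
  Matrix.diagonal (minorDet A)

/-- Mirror adjacency matrix `Â = (W·A + Aᵀ·W)/2`. -/
noncomputable def mirrorAdj {n : ℕ} (A : Matrix (Fin n) (Fin n) ℝ) : Matrix (Fin n) (Fin n) ℝ :=
  (1/2 : ℝ) • (Wmat A * A + Aᵀ * Wmat A)

/-- Mirror Laplacian `L̂ = (W·L + Lᵀ·W)/2`. -/
noncomputable def mirrorLap {n : ℕ} (A : Matrix (Fin n) (Fin n) ℝ) : Matrix (Fin n) (Fin n) ℝ :=
  (1/2 : ℝ) • (Wmat A * lapOf A + (lapOf A)ᵀ * Wmat A)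

/-- `(j, i)` is a directed edge when `a_ij ≠ 0`; strong connectivity: a directed
path between every ordered pair of distinct nodes. -/
def StronglyConnected {n : ℕ} (A : Matrix (Fin n) (Fin n) ℝ) : Prop :=
  ∀ i j : Fin n, i ≠ j → Relation.TransGen (fun u v => A v u ≠ 0) i j

/-- `σ` is the diagonal of a gauge transformation: each entry is `±1`. -/
def IsGauge {n : ℕ} (σ : Fin n → ℝ) : Prop := ∀ i, σ i = 1 ∨ σ i = -1

/-- Structural balance: there is a gauge transformation `D = diag σ` with all entries
of `D·A·D` (entrywise `σ i * A i j * σ j`) nonnegative. -/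
def StructBalanced {n : ℕ} (A : Matrix (Fin n) (Fin n) ℝ) : Prop :=
  ∃ σ : Fin n → ℝ, IsGauge σ ∧ ∀ i j, 0 ≤ σ i * A i j * σ j

/-- Improved Laplacian potential function
`Φ_e(x) = Σ_i Σ_j det(L̄_ii)·|a_ij|·(x_i − sgn(a_ij)·x_j)²`. -/
noncomputable def PhiE {n : ℕ} (A : Matrix (Fin n) (Fin n) ℝ) (x : Fin n → ℝ) : ℝ :=
  ∑ i, ∑ j, minorDet A i * |A i j| * (x i - Real.sign (A i j) * x j) ^ 2

open Polynomial in
theorem Polynomial.Monic.eval_zero_pos {p : ℝ[X]} (hp : p.Monic)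
    (hroot : ∀ t : ℝ, 0 ≤ t → p.eval t ≠ 0) : 0 < p.eval 0 := by
  obtain hdeg | hdeg := Nat.eq_zero_or_pos p.natDegree
  · simp [eq_one_of_monic_natDegree_zero hp hdeg]
  have htop : Tendsto (p.eval ·) atTop atTop :=
    tendsto_atTop_of_leadingCoeff_nonneg _ (natDegree_pos_iff_degree_pos.mp hdeg)
      (by simp [hp.leadingCoeff])
  obtain ⟨T, hpT, hT⟩ := ((htop.eventually_gt_atTop 0).and (eventually_ge_atTop 0)).exists
  by_contra! hp0
  obtain ⟨c, hc, hpc⟩ := intermediate_value_Icc hT p.continuous.continuousOn ⟨hp0, hpT.le⟩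
  exact hroot c hc.1 hpc

theorem Matrix.det_pos_of_det_add_smul_one_ne_zero {ι : Type*} [Fintype ι] [DecidableEq ι]
    (M : Matrix ι ι ℝ) (h : ∀ t : ℝ, 0 ≤ t → (M + t • (1 : Matrix ι ι ℝ)).det ≠ 0) :
    0 < M.det := by
  have heval : ∀ t, (-M).charpoly.eval t = (M + t • (1 : Matrix ι ι ℝ)).det := fun t => by
    rw [eval_charpoly, scalar_apply, ← smul_one_eq_diagonal, sub_neg_eq_add, add_comm]
  simpa [heval] using (charpoly_monic (-M)).eval_zero_pos fun t ht => by rw [heval]; exact h t ht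

theorem Matrix.submatrix_subtype_ne_mulVec {ι R : Type*} [Fintype ι] [DecidableEq ι]
    [NonUnitalNonAssocSemiring R] (M : Matrix ι ι R) (i : ι) (x : {j // j ≠ i} → R)
    (k : {j // j ≠ i}) :
    (M.submatrix Subtype.val Subtype.val *ᵥ x) k =
      (M *ᵥ fun j => if h : j = i then 0 else x ⟨j, h⟩) k := by
  simp only [mulVec, dotProduct, Fintype.sum_eq_add_sum_subtype_ne _ i, dif_pos, mul_zero,
    zero_add, submatrix_apply]
  exact Finset.sum_congr rfl fun j _ => by rw [dif_neg j.2]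

theorem abs_eq_of_mul_eq_sum_mul_of_abs_le {ι : Type*} [Fintype ι] {w y : ι → ℝ} {t c : ℝ}
    (hw : ∀ j, 0 ≤ w j) (ht : 0 ≤ t) (hrow : (t + ∑ j, w j) * c = ∑ j, w j * y j)
    (hmax : ∀ j, |y j| ≤ |c|) {j : ι} (hj : w j ≠ 0) : |y j| = |c| := by
  have hgap : ∀ j ∈ Finset.univ, 0 ≤ w j * (|c| - |y j|) :=
    fun j _ => mul_nonneg (hw j) (sub_nonneg.mpr (hmax j))
  have hsum : ∑ j, w j * (|c| - |y j|) ≤ 0 := by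
    have hrow_abs : (t + ∑ j, w j) * |c| ≤ ∑ j, w j * |y j| := by
      calc (t + ∑ j, w j) * |c| = |∑ j, w j * y j| := by
            rw [← hrow, abs_mul, abs_of_nonneg (add_nonneg ht (Finset.sum_nonneg fun j _ => hw j))]
        _ ≤ ∑ j, |w j * y j| := Finset.abs_sum_le_sum_abs _ _
        _ = ∑ j, w j * |y j| := by simp only [abs_mul, abs_of_nonneg (hw _)]
    simp only [mul_sub, Finset.sum_sub_distrib, ← Finset.sum_mul]
    nlinarith [abs_nonneg c]
  have := (Finset.sum_eq_zero_iff_of_nonneg hgap).mp (le_antisymm hsum (Finset.sum_nonneg hgap)) j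
    (Finset.mem_univ j)
  linarith [(mul_eq_zero.mp this).resolve_left hj]

theorem mul_add_mul_eq_zero_iff {p q a b : ℝ} (hp : 0 < p) (hq : 0 < q) (hab : 0 ≤ a * b) :
    p * a + q * b = 0 ↔ a = 0 ∧ b = 0 := by
  refine ⟨fun h => ?_, fun ⟨ha, hb⟩ => by simp [ha, hb]⟩
  have hpa : p * a ^ 2 + q * (a * b) = 0 := by linear_combination a * h
  have hqb : p * (a * b) + q * b ^ 2 = 0 := by linear_combination b * h
  have ha : p * a ^ 2 = 0 := by nlinarith [mul_nonneg hq.le hab, mul_nonneg hp.le (sq_nonneg a)]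
  have hb : q * b ^ 2 = 0 := by nlinarith [mul_nonneg hp.le hab, mul_nonneg hq.le (sq_nonneg b)]
  exact ⟨by simpa [hp.ne'] using ha, by simpa [hq.ne'] using hb⟩

noncomputable def reducedLapBar {n : ℕ} (A : Matrix (Fin n) (Fin n) ℝ) (i : Fin n) :
    Matrix {j // j ≠ i} {j // j ≠ i} ℝ :=
  (lapBar A).submatrix Subtype.val Subtype.val

section

variable {n : ℕ} {A : Matrix (Fin n) (Fin n) ℝ}

theorem lapBar_mulVec_apply (y : Fin n → ℝ) (k : Fin n) :
    (lapBar A *ᵥ y) k = inDeg A k * y k - ∑ j, |A k j| * y j := by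
  rw [lapBar, sub_mulVec, Pi.sub_apply, mulVec_diagonal]
  rfl

theorem StronglyConnected.eq_zero_of_row_eq (hsc : StronglyConnected A) {i : Fin n} {t : ℝ}
    (ht : 0 ≤ t) {y : Fin n → ℝ} (hyi : y i = 0)
    (hrow : ∀ k ≠ i, (t + inDeg A k) * y k = ∑ j, |A k j| * y j) : y = 0 := by
  have : Nonempty (Fin n) := ⟨i⟩
  obtain ⟨m, hm⟩ := Finite.exists_max fun j => |y j|
  suffices hym : |y m| = 0 from funext fun j => abs_nonpos_iff.mp (hym ▸ hm j)
  by_contra hym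
  have hmi : m ≠ i := by rintro rfl; simp [hyi] at hym
  have hprop : ∀ u v, A v u ≠ 0 → |y v| = |y m| → |y u| = |y m| := fun u v hvu hv => by
    have hvi : v ≠ i := by rintro rfl; simp [hyi] at hv; exact hym hv.symm
    rw [← hv] at hm ⊢
    exact abs_eq_of_mul_eq_sum_mul_of_abs_le (fun j => abs_nonneg _) ht (hrow v hvi) hm
      (abs_ne_zero.mpr hvu)
  have hiM : |y i| = |y m| := Relation.TransGen.closed' (P := fun u => |y u| = |y m|)
    (fun h hv => hprop _ _ h hv) (hsc i m hmi.symm) rfl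
  exact hym (by rw [← hiM, hyi, abs_zero])

theorem StronglyConnected.eq_zero_of_reducedLapBar_add_smul_one_mulVec_eq_zero
    (hsc : StronglyConnected A) {i : Fin n} {t : ℝ} (ht : 0 ≤ t) {x : {j // j ≠ i} → ℝ}
    (hx : (reducedLapBar A i + t • (1 : Matrix _ _ ℝ)) *ᵥ x = 0) : x = 0 := by
  set y : Fin n → ℝ := fun j => if h : j = i then 0 else x ⟨j, h⟩
  have hyx : ∀ k : {j // j ≠ i}, y k = x k := fun k => dif_neg k.2
  have hy0 : y = 0 := hsc.eq_zero_of_row_eq ht (dif_pos rfl) fun k hk => by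
    have hk := congrFun hx ⟨k, hk⟩
    rw [add_mulVec, smul_mulVec, one_mulVec, Pi.add_apply, reducedLapBar,
      submatrix_subtype_ne_mulVec, lapBar_mulVec_apply, Pi.smul_apply, ← hyx] at hk
    simp only [smul_eq_mul, Pi.zero_apply] at hk
    linarith
  exact funext fun k => by rw [← hyx, hy0, Pi.zero_apply, Pi.zero_apply]

theorem StronglyConnected.minorDet_pos (hsc : StronglyConnected A) (i : Fin n) :
    0 < minorDet A i :=
  (reducedLapBar A i).det_pos_of_det_add_smul_one_ne_zero fun t ht hdet => by
    obtain ⟨x, hx0, hx⟩ := exists_mulVec_eq_zero_iff.mpr hdet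
    exact hx0 (hsc.eq_zero_of_reducedLapBar_add_smul_one_mulVec_eq_zero ht hx)

theorem mirrorAdj_apply (i j : Fin n) :
    mirrorAdj A i j = (minorDet A i * A i j + minorDet A j * A j i) / 2 := by
  simp [mirrorAdj, Wmat, diagonal_mul, mul_diagonal]
  ring

theorem mirrorAdj_ne_zero_iff (hW : ∀ i, 0 < minorDet A i) (hdigon : ∀ i j, 0 ≤ A i j * A j i)
    (i j : Fin n) : mirrorAdj A i j ≠ 0 ↔ A i j ≠ 0 ∨ A j i ≠ 0 := by
  rw [mirrorAdj_apply, Ne, div_eq_zero_iff, mul_add_mul_eq_zero_iff (hW i) (hW j) (hdigon i j),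
    not_or, not_and_or]
  exact and_iff_left two_ne_zero

end

theorem mirror_graph_connected_general (n : ℕ)
    (A : Matrix (Fin n) (Fin n) ℝ)
    (hdigon : ∀ i j, 0 ≤ A i j * A j i)
    (hsc : StronglyConnected A) :
    (∀ i j, i ≠ j → (mirrorAdj A i j ≠ 0 ↔ (A i j ≠ 0 ∨ A j i ≠ 0))) ∧
    (∀ i j : Fin n, Relation.ReflTransGen (fun u v => mirrorAdj A u v ≠ 0) i j) := by
  have hedge := mirrorAdj_ne_zero_iff hsc.minorDet_pos hdigon
  refine ⟨fun i j _ => hedge i j, fun i j => ?_⟩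
  obtain rfl | hij := eq_or_ne i j
  · exact .refl
  · exact (Relation.TransGen.mono (fun u v huv => (hedge u v).mpr (.inr huv)) _ _
      (hsc i j hij)).to_reflTransGen

/-- the mirror signed graph of a strongly connected signed digraph is
connected, and its edge set is `E ∪ Ẽ`. -/
theorem mirror_graph_connected (n : ℕ) (hn : 2 ≤ n)
    (A : Matrix (Fin n) (Fin n) ℝ)
    (hdiag : ∀ i, A i i = 0) (hdigon : ∀ i j, 0 ≤ A i j * A j i)
    (hsc : StronglyConnected A) :
    (∀ i j, i ≠ j → (mirrorAdj A i j ≠ 0 ↔ (A i j ≠ 0 ∨ A j i ≠ 0))) ∧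
    (∀ i j : Fin n, Relation.ReflTransGen (fun u v => mirrorAdj A u v ≠ 0) i j) :=
  mirror_graph_connected_general n A hdigon hsc
end

section
/- Let G be a strongly connected signed digraph and let L̂ = (W·L + Lᵀ·W)/2 be its mirror Laplacian, a real symmetric matrix with real eigenvalues λ_1(L̂) ≤ λ_2(L̂) ≤ … ≤ λ_n(L̂) listed in increasing order with multiplicity. Then G is structurally balanced if and only if 0 = λ_1(L̂) < λ_2(L̂); that is, if and only if L̂ is positive semidefinite and 0 is an eigenvalue of L̂ of multiplicity exactly one. -/
open Matrix BigOperators Filter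

/-!
Write `wᵢ = det L̄ᵢᵢ`. These principal minors are the entries of the adjugate of `L̄`, a matrix
with zero row sums, so `w` is a left null vector of `L̄`: `Σᵢ wᵢ |aᵢⱼ| = wⱼ Δⱼ`. This balance of
weighted in- and out-flows turns the quadratic form of `L̂` into
`½ Σᵢⱼ wᵢ |aᵢⱼ| (xᵢ - sgn(aᵢⱼ) xⱼ)²`.

Strong connectivity makes every `wᵢ` positive: `Δ - t Ā` with the node `i` removed is nonsingular
for `t ∈ [0, 1]` by a maximum principle (the maximum of `|v|` for a kernel vector `v` spreads to
in-neighbours, so it would reach a node with an edge from `i`, where it cannot be attained), so its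
determinant keeps the sign of `det Δ` along the segment. Hence `L̂` is positive semidefinite and
its kernel consists of the vectors with `xᵢ = sgn(aᵢⱼ) xⱼ` along every edge. Along paths `|x|` is
constant, so such a vector is either `0` or nowhere zero; in the latter case `sgn x` is a balancing
gauge, and conversely a balancing gauge spans the kernel.
-/

namespace Matrix

variable {ι R : Type*} [Fintype ι] [DecidableEq ι] [CommRing R]

theorem det_updateRow_single_self (M : Matrix ι ι R) (k : ι) :
    (M.updateRow k (Pi.single k 1)).det =
      (M.submatrix ((↑) : {j // j ≠ k} → ι) (↑)).det := by
  have : Unique {j // ¬j ≠ k} := ⟨⟨⟨k, not_not.2 rfl⟩⟩, fun j => Subtype.ext (not_not.1 j.2)⟩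
  rw [twoBlockTriangular_det _ (· ≠ k) fun i hi j hj => by simp [not_not.1 hi, hj],
    det_unique (toSquareBlockProp _ fun i => ¬i ≠ k)]
  have hk : ((default : {j // ¬j ≠ k}) : ι) = k := not_not.1 (default : {j // ¬j ≠ k}).2
  have hM : (of fun i j : {j // j ≠ k} => M.updateRow k (Pi.single k 1) i j) =
      M.submatrix (↑) (↑) := by
    ext i j
    simp [updateRow_ne i.2]
  rw [toSquareBlockProp_def, toSquareBlockProp_def, hM, of_apply, hk]
  simp

theorem det_eq_zero_of_sum_row_eq_zero [Nontrivial R] [Nonempty ι] {M : Matrix ι ι R}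
    (h : ∀ i, ∑ j, M i j = 0) : M.det = 0 := by
  refine det_eq_zero_of_mulVec_eq_zero_of_mem_nonZeroDivisors (v := fun _ => 1) ?_
    (i := Classical.arbitrary ι) (one_mem _)
  ext i
  simpa [mulVec, dotProduct] using h i

theorem adjugate_apply_of_sum_row_eq_zero [Nontrivial R] {M : Matrix ι ι R}
    (h : ∀ i, ∑ j, M i j = 0) (j k : ι) :
    M.adjugate j k = (M.submatrix ((↑) : {l // l ≠ k} → ι) (↑)).det := by
  have : Nonempty ι := ⟨k⟩
  have hdiff : (M.updateRow k (Pi.single j 1 - Pi.single k 1)).det = 0 := by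
    refine det_eq_zero_of_sum_row_eq_zero fun i => ?_
    rcases eq_or_ne i k with rfl | hi
    · simp [Finset.sum_sub_distrib]
    · simpa [updateRow_ne hi] using h i
  rw [adjugate_apply, ← det_updateRow_single_self, ← add_sub_cancel (Pi.single k 1) (Pi.single j 1),
    det_updateRow_add, hdiff, add_zero]

theorem sum_det_submatrix_mul_eq_zero_of_sum_row_eq_zero [Nontrivial R] {M : Matrix ι ι R}
    (h : ∀ i, ∑ j, M i j = 0) (j : ι) :
    ∑ k, (M.submatrix ((↑) : {l // l ≠ k} → ι) (↑)).det * M k j = 0 := by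
  have : Nonempty ι := ⟨j⟩
  have hdiag := congrFun (congrFun (adjugate_mul M) j) j
  simp only [det_eq_zero_of_sum_row_eq_zero h, zero_smul, mul_apply, zero_apply] at hdiag
  simpa only [adjugate_apply_of_sum_row_eq_zero h] using hdiag

end Matrix

theorem Real.sign_sign_mul (a y : ℝ) : Real.sign (Real.sign a * y) = Real.sign a * Real.sign y := by
  rcases Real.sign_apply_eq a with h | h | h <;> simp [h, Real.sign_neg, Real.sign_zero]

theorem abs_mul_sub_sign_mul_sq (a x y : ℝ) :
    |a| * (x - Real.sign a * y) ^ 2 = |a| * x ^ 2 - 2 * (a * x * y) + |a| * y ^ 2 := by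
  rcases lt_trichotomy a 0 with h | rfl | h
  · rw [Real.sign_of_neg h, abs_of_neg h]; ring
  · simp
  · rw [Real.sign_of_pos h, abs_of_pos h]; ring

theorem pos_of_continuousOn_Icc_of_ne_zero {f : ℝ → ℝ} {a b : ℝ} (hab : a ≤ b)
    (hf : ContinuousOn f (Set.Icc a b)) (hne : ∀ t ∈ Set.Icc a b, f t ≠ 0) (ha : 0 < f a) :
    0 < f b := by
  by_contra! hb
  obtain ⟨t, ht, hft⟩ := intermediate_value_Icc' hab hf ⟨hb, ha.le⟩
  exact hne t ht hft

section SignedDigraph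

variable {n : ℕ} {A : Matrix (Fin n) (Fin n) ℝ}

theorem sum_lapBar_row (A : Matrix (Fin n) (Fin n) ℝ) (i : Fin n) : ∑ j, lapBar A i j = 0 := by
  simp [lapBar, inDeg, Finset.sum_sub_distrib, Matrix.diagonal_apply]

theorem sum_minorDet_mul_abs (A : Matrix (Fin n) (Fin n) ℝ) (j : Fin n) :
    ∑ i, minorDet A i * |A i j| = minorDet A j * inDeg A j := by
  have := Matrix.sum_det_submatrix_mul_eq_zero_of_sum_row_eq_zero (sum_lapBar_row A) j
  simp only [lapBar, Matrix.sub_apply, Matrix.diagonal_apply, Matrix.of_apply, mul_sub,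
    Finset.sum_sub_distrib, mul_ite, mul_zero, Finset.sum_ite_eq', Finset.mem_univ, if_true,
    sub_eq_zero] at this
  exact this.symm

theorem StronglyConnected.of_closed (hsc : StronglyConnected A) {P : Fin n → Prop}
    (hP : ∀ u v, A u v ≠ 0 → P u → P v) {k : Fin n} (hk : P k) (i : Fin n) : P i := by
  rcases eq_or_ne i k with rfl | hik
  · exact hk
  have path := hsc i k hik
  clear hik
  induction path with
  | single h => exact hP _ _ h hk
  | tail _ h ih => exact ih (hP _ _ h hk)

theorem StronglyConnected.apply_eq {α : Type*} (hsc : StronglyConnected A) {f : Fin n → α}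
    (hf : ∀ u v, A u v ≠ 0 → f u = f v) (u w : Fin n) : f u = f w :=
  hsc.of_closed (P := (f · = f w)) (fun u v h hu => (hf u v h).symm.trans hu) rfl u

theorem inDeg_nonneg (A : Matrix (Fin n) (Fin n) ℝ) (i : Fin n) : 0 ≤ inDeg A i :=
  Finset.sum_nonneg fun _ _ => abs_nonneg _

noncomputable def deformedLapBar (A : Matrix (Fin n) (Fin n) ℝ) (t : ℝ) :
    Matrix (Fin n) (Fin n) ℝ :=
  Matrix.diagonal (inDeg A) - t • Matrix.of fun i j => |A i j|

theorem deformedLapBar_submatrix_mulVec_apply (A : Matrix (Fin n) (Fin n) ℝ) (t : ℝ) (i : Fin n)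
    (v : {j // j ≠ i} → ℝ) (a : {j // j ≠ i}) :
    ((deformedLapBar A t).submatrix ((↑) : {j // j ≠ i} → Fin n) (↑) *ᵥ v) a =
      inDeg A a * v a - t * ∑ b : {j // j ≠ i}, |A a b| * v b := by
  simp [deformedLapBar, Matrix.mulVec, dotProduct, sub_mul, Finset.sum_sub_distrib,
    Matrix.diagonal_apply, Subtype.val_inj, Finset.mul_sum, mul_assoc]

theorem deformedLapBar_maximum_principle {t : ℝ} (ht₀ : 0 ≤ t) (ht₁ : t ≤ 1) {i : Fin n}
    {v : {j // j ≠ i} → ℝ}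
    (hv : (deformedLapBar A t).submatrix ((↑) : {j // j ≠ i} → Fin n) (↑) *ᵥ v = 0)
    {a : {j // j ≠ i}} (hmax : ∀ b, |v b| ≤ |v a|) (ha₀ : v a ≠ 0) :
    A a i = 0 ∧ ∀ b : {j // j ≠ i}, A a b ≠ 0 → |v b| = |v a| := by
  have hrow : inDeg A a * v a = t * ∑ b : {j // j ≠ i}, |A a b| * v b := by
    have := congrFun hv a
    rw [deformedLapBar_submatrix_mulVec_apply] at this
    simpa [sub_eq_zero] using this
  have hdom : inDeg A a * |v a| ≤ ∑ b : {j // j ≠ i}, |A a b| * |v b| :=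
    calc inDeg A a * |v a| = |t * ∑ b : {j // j ≠ i}, |A a b| * v b| := by
          rw [← abs_of_nonneg (inDeg_nonneg A a), ← abs_mul, hrow]
      _ ≤ |∑ b : {j // j ≠ i}, |A a b| * v b| := by
          rw [abs_mul, abs_of_nonneg ht₀]
          exact mul_le_of_le_one_left (abs_nonneg _) ht₁
      _ ≤ ∑ b : {j // j ≠ i}, |A a b| * |v b| := by
          simpa [abs_mul] using
            Finset.abs_sum_le_sum_abs (fun b : {j // j ≠ i} => |A a b| * v b) .univ
  have hdeg : inDeg A a = ∑ b : {j // j ≠ i}, |A a b| + |A a i| := by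
    rw [inDeg, ← Finset.sum_erase_add _ _ (Finset.mem_univ i)]
    congr 1
    exact Finset.sum_subtype _ (fun j => by simp) _
  have hnonneg : ∀ b : {j // j ≠ i}, 0 ≤ |A a b| * (|v a| - |v b|) :=
    fun b => mul_nonneg (abs_nonneg _) (sub_nonneg.2 (hmax b))
  -- The row of `a` is weakly diagonally dominant, and the maximality of `|v a|` forces equality.
  have hsum : |A a i| * |v a| + ∑ b : {j // j ≠ i}, |A a b| * (|v a| - |v b|) = 0 := by
    refine le_antisymm ?_ (add_nonneg (mul_nonneg (abs_nonneg _) (abs_nonneg _))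
      (Finset.sum_nonneg fun b _ => hnonneg b))
    simp only [mul_sub, Finset.sum_sub_distrib, ← Finset.sum_mul]
    rw [hdeg] at hdom
    linarith
  obtain ⟨hi, hnbr⟩ := (add_eq_zero_iff_of_nonneg (mul_nonneg (abs_nonneg _) (abs_nonneg _))
    (Finset.sum_nonneg fun b _ => hnonneg b)).1 hsum
  refine ⟨abs_eq_zero.1 ((mul_eq_zero.1 hi).resolve_right (abs_ne_zero.2 ha₀)), fun b hb => ?_⟩
  have hterm := (Finset.sum_eq_zero_iff_of_nonneg fun b _ => hnonneg b).1 hnbr b (Finset.mem_univ _)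
  have hgap := (mul_eq_zero.1 hterm).resolve_left (abs_ne_zero.2 hb)
  linarith

theorem StronglyConnected.eq_zero_of_deformedLapBar_mulVec_eq_zero (hsc : StronglyConnected A)
    {t : ℝ} (ht₀ : 0 ≤ t) (ht₁ : t ≤ 1) {i : Fin n} {v : {j // j ≠ i} → ℝ}
    (hv : (deformedLapBar A t).submatrix ((↑) : {j // j ≠ i} → Fin n) (↑) *ᵥ v = 0) :
    v = 0 := by
  by_contra hv₀
  obtain ⟨a₀, ha₀⟩ := Function.ne_iff.1 hv₀
  obtain ⟨k, -, hk⟩ :=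
    Finset.exists_max_image Finset.univ (fun a => |v a|) ⟨a₀, Finset.mem_univ _⟩
  have hk₀ : v k ≠ 0 := abs_pos.1 ((abs_pos.2 ha₀).trans_le (hk a₀ (Finset.mem_univ _)))
  -- The maximum of `|v|` spreads backwards along edges, but can never reach `i`.
  have hclosed : ∀ u w, A u w ≠ 0 → (∃ hu : u ≠ i, |v ⟨u, hu⟩| = |v k|) →
      ∃ hw : w ≠ i, |v ⟨w, hw⟩| = |v k| := by
    rintro u w huw ⟨hu, hvu⟩
    have hmax : ∀ b, |v b| ≤ |v ⟨u, hu⟩| := fun b => hvu ▸ hk b (Finset.mem_univ _)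
    obtain ⟨hui, hnbr⟩ := deformedLapBar_maximum_principle ht₀ ht₁ hv hmax
      (abs_ne_zero.1 (hvu ▸ abs_ne_zero.2 hk₀))
    have hw : w ≠ i := by
      rintro rfl
      exact huw hui
    exact ⟨hw, (hnbr ⟨w, hw⟩ huw).trans hvu⟩
  obtain ⟨hii, -⟩ := hsc.of_closed hclosed (k := k) ⟨k.2, rfl⟩ i
  exact hii rfl

theorem dotProduct_mulVec_mirrorLap (A : Matrix (Fin n) (Fin n) ℝ) (x : Fin n → ℝ) :
    x ⬝ᵥ mirrorLap A *ᵥ x = PhiE A x / 2 := by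
  set T₁ := ∑ i, ∑ j, minorDet A i * |A i j| * x i ^ 2
  set T₂ := ∑ i, ∑ j, minorDet A i * A i j * x i * x j
  have hsymm : x ⬝ᵥ ((lapOf A)ᵀ * Wmat A) *ᵥ x = x ⬝ᵥ (Wmat A * lapOf A) *ᵥ x := by
    rw [show (lapOf A)ᵀ * Wmat A = (Wmat A * lapOf A)ᵀ by
      rw [Matrix.transpose_mul, Wmat, Matrix.diagonal_transpose],
      dotProduct_mulVec, Matrix.vecMul_transpose, dotProduct_comm]
  have hrow : ∀ i, ((Wmat A * lapOf A) *ᵥ x) i =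
      minorDet A i * ∑ j, (|A i j| * x i - A i j * x j) := by
    intro i
    rw [Wmat, ← Matrix.mulVec_mulVec, Matrix.mulVec_diagonal, lapOf, Matrix.sub_mulVec,
      Pi.sub_apply, Matrix.mulVec_diagonal, inDeg, Matrix.mulVec, dotProduct, Finset.sum_mul,
      Finset.sum_sub_distrib]
  have hWL : x ⬝ᵥ (Wmat A * lapOf A) *ᵥ x = T₁ - T₂ := by
    simp only [dotProduct, hrow, T₁, T₂, Finset.mul_sum, ← Finset.sum_sub_distrib]
    exact Finset.sum_congr rfl fun i _ => Finset.sum_congr rfl fun j _ => by ring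
  have hΦ : PhiE A x = T₁ - 2 * T₂ + ∑ i, ∑ j, minorDet A i * |A i j| * x j ^ 2 := by
    simp only [PhiE, T₁, T₂, Finset.mul_sum, ← Finset.sum_sub_distrib, ← Finset.sum_add_distrib]
    refine Finset.sum_congr rfl fun i _ => Finset.sum_congr rfl fun j _ => ?_
    rw [mul_assoc, abs_mul_sub_sign_mul_sq]
    ring
  have hflow : ∑ i, ∑ j, minorDet A i * |A i j| * x j ^ 2 = T₁ := by
    rw [Finset.sum_comm]
    simp only [T₁, ← Finset.sum_mul, sum_minorDet_mul_abs, inDeg, Finset.mul_sum]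
  rw [mirrorLap, Matrix.smul_mulVec, dotProduct_smul, Matrix.add_mulVec, dotProduct_add, hsymm,
    hWL, hΦ, hflow, smul_eq_mul]
  ring

def signConsistent (A : Matrix (Fin n) (Fin n) ℝ) : Submodule ℝ (Fin n → ℝ) where
  carrier := {x | ∀ i j, A i j ≠ 0 → x i = Real.sign (A i j) * x j}
  add_mem' hx hy i j h := by simp [hx i j h, hy i j h, mul_add]
  zero_mem' _ _ _ := by simp
  smul_mem' c x hx i j h := by simp [hx i j h, mul_left_comm]

theorem mem_signConsistent {x : Fin n → ℝ} :
    x ∈ signConsistent A ↔ ∀ i j, A i j ≠ 0 → x i = Real.sign (A i j) * x j :=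
  Iff.rfl

theorem PhiE_nonneg (hw : ∀ i, 0 ≤ minorDet A i) (x : Fin n → ℝ) : 0 ≤ PhiE A x :=
  Finset.sum_nonneg fun i _ => Finset.sum_nonneg fun j _ => by have := hw i; positivity

theorem PhiE_eq_zero_iff (hw : ∀ i, 0 < minorDet A i) (x : Fin n → ℝ) :
    PhiE A x = 0 ↔ x ∈ signConsistent A := by
  have hterm : ∀ i j, 0 ≤ minorDet A i * |A i j| * (x i - Real.sign (A i j) * x j) ^ 2 :=
    fun i j => by have := hw i; positivity
  rw [PhiE, Finset.sum_eq_zero_iff_of_nonneg fun i _ => Finset.sum_nonneg fun j _ => hterm i j]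
  simp only [Finset.sum_eq_zero_iff_of_nonneg fun j _ => hterm _ j, Finset.mem_univ,
    true_implies]
  simp [(hw _).ne', sub_eq_zero, mem_signConsistent, or_iff_not_imp_left]

theorem mirrorLap_posSemidef (hw : ∀ i, 0 ≤ minorDet A i) : (mirrorLap A).PosSemidef := by
  refine Matrix.posSemidef_iff_dotProduct_mulVec.2 ⟨?_, fun x => ?_⟩
  · rw [Matrix.IsHermitian, Matrix.conjTranspose_eq_transpose_of_trivial, mirrorLap,
      Matrix.transpose_smul, Matrix.transpose_add, Matrix.transpose_mul, Matrix.transpose_mul,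
      Matrix.transpose_transpose, Wmat, Matrix.diagonal_transpose, add_comm]
  · rw [star_trivial, dotProduct_mulVec_mirrorLap]
    exact div_nonneg (PhiE_nonneg hw x) zero_le_two

theorem ker_mirrorLap_mulVecLin (hw : ∀ i, 0 < minorDet A i) :
    LinearMap.ker (mirrorLap A).mulVecLin = signConsistent A := by
  ext x
  rw [LinearMap.mem_ker, Matrix.mulVecLin_apply,
    ← (mirrorLap_posSemidef fun i => (hw i).le).dotProduct_mulVec_zero_iff, star_trivial,
    dotProduct_mulVec_mirrorLap, div_eq_zero_iff, PhiE_eq_zero_iff hw]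
  simp

theorem IsGauge.mul_self {σ : Fin n → ℝ} (hσ : IsGauge σ) (i : Fin n) : σ i * σ i = 1 := by
  rcases hσ i with h | h <;> simp [h]

theorem mem_signConsistent_of_balancing {σ : Fin n → ℝ} (hσ : IsGauge σ)
    (hbal : ∀ i j, 0 ≤ σ i * A i j * σ j) : σ ∈ signConsistent A := by
  intro i j hij
  have := hbal i j
  rcases hσ i with h | h <;> rcases hσ j with h' | h' <;>
    simp only [h, h', one_mul, mul_one, neg_mul, mul_neg, neg_neg, neg_nonneg] at this ⊢
  · simp [Real.sign_of_pos (this.lt_of_ne' hij)]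
  · simp [Real.sign_of_neg (this.lt_of_ne hij)]
  · simp [Real.sign_of_neg (this.lt_of_ne hij)]
  · simp [Real.sign_of_pos (this.lt_of_ne' hij)]

theorem StronglyConnected.mul_apply_eq_of_mem_signConsistent (hsc : StronglyConnected A)
    {x y : Fin n → ℝ} (hx : x ∈ signConsistent A) (hy : y ∈ signConsistent A) (u w : Fin n) :
    x u * y u = x w * y w := by
  refine hsc.apply_eq (f := fun u => x u * y u) (fun u v huv => ?_) u w
  have hs : Real.sign (A u v) * Real.sign (A u v) = 1 := by
    rcases Real.sign_apply_eq_of_ne_zero _ huv with h | h <;> simp [h]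
  rw [hx u v huv, hy u v huv]
  linear_combination (x v * y v) * hs

theorem StronglyConnected.signConsistent_eq_span (hsc : StronglyConnected A) (k : Fin n)
    {σ : Fin n → ℝ} (hσ : IsGauge σ) (hσA : σ ∈ signConsistent A) :
    signConsistent A = Submodule.span ℝ {σ} := by
  refine le_antisymm (fun x hx => Submodule.mem_span_singleton.2 ⟨x k * σ k, funext fun u => ?_⟩)
    (Submodule.span_le.2 (Set.singleton_subset_iff.2 hσA))
  have hconst := hsc.mul_apply_eq_of_mem_signConsistent hx hσA u k
  simp only [Pi.smul_apply, smul_eq_mul]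
  linear_combination (-σ u) * hconst + x u * hσ.mul_self u

theorem StronglyConnected.structBalanced_of_mem_signConsistent (hsc : StronglyConnected A)
    {x : Fin n → ℝ} (hx : x ∈ signConsistent A) (hx₀ : x ≠ 0) : StructBalanced A := by
  obtain ⟨k, hk⟩ := Function.ne_iff.1 hx₀
  have hne : ∀ u, x u ≠ 0 := fun u hu => hk <| by
    have := hsc.mul_apply_eq_of_mem_signConsistent hx hx u k
    simp_all
  refine ⟨fun u => Real.sign (x u), fun u => (Real.sign_apply_eq_of_ne_zero _ (hne u)).symm, ?_⟩
  intro i j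
  rcases eq_or_ne (A i j) 0 with h | h
  · simp [h]
  · show 0 ≤ Real.sign (x i) * A i j * Real.sign (x j)
    rw [hx i j h, Real.sign_sign_mul]
    calc 0 ≤ Real.sign (A i j) * A i j * Real.sign (x j) ^ 2 :=
          mul_nonneg (Real.sign_mul_nonneg _) (sq_nonneg _)
      _ = _ := by ring

theorem StronglyConnected.structBalanced_iff_finrank_signConsistent (hsc : StronglyConnected A)
    (hn : 0 < n) : StructBalanced A ↔ Module.finrank ℝ (signConsistent A) = 1 := by
  constructor
  · rintro ⟨σ, hσ, hbal⟩
    rw [hsc.signConsistent_eq_span ⟨0, hn⟩ hσ (mem_signConsistent_of_balancing hσ hbal),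
      finrank_span_singleton]
    intro hσ₀
    simpa [hσ₀] using hσ.mul_self ⟨0, hn⟩
  · intro h
    have hbot : signConsistent A ≠ ⊥ := fun hbot => by
      rw [hbot, finrank_bot] at h
      exact zero_ne_one h
    obtain ⟨x, hx, hx₀⟩ := Submodule.exists_mem_ne_zero_of_ne_bot hbot
    exact hsc.structBalanced_of_mem_signConsistent hx hx₀

end SignedDigraph

theorem balanced_iff_psd_and_simple_zero_general (n : ℕ) (hn : 2 ≤ n)
    (A : Matrix (Fin n) (Fin n) ℝ)
    (hsc : StronglyConnected A) :
    StructBalanced A ↔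
      (mirrorLap A).PosSemidef ∧
        Module.finrank ℝ (LinearMap.ker (mirrorLap A).mulVecLin) = 1 := by
  have hw := hsc.minorDet_pos
  rw [ker_mirrorLap_mulVecLin hw, hsc.structBalanced_iff_finrank_signConsistent (by omega)]
  exact ⟨fun h => ⟨mirrorLap_posSemidef fun i => (hw i).le, h⟩, And.right⟩

/-- `G` is structurally balanced iff `L̂` is positive semidefinite and `0`
is an eigenvalue of `L̂` of multiplicity exactly one (equivalently, since `L̂` is
symmetric, its kernel is one-dimensional). -/
theorem balanced_iff_psd_and_simple_zero (n : ℕ) (hn : 2 ≤ n)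
    (A : Matrix (Fin n) (Fin n) ℝ)
    (hdiag : ∀ i, A i i = 0) (hdigon : ∀ i j, 0 ≤ A i j * A j i)
    (hsc : StronglyConnected A) :
    StructBalanced A ↔
      (mirrorLap A).PosSemidef ∧
        Module.finrank ℝ (LinearMap.ker (mirrorLap A).mulVecLin) = 1 :=
  balanced_iff_psd_and_simple_zero_general n hn A hsc
end
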